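/- arXiv:1604.03825 — 5 statements merged into one kernel-verified Lean document; each statement's English description precedes it below -/
import Mathlib

section
/- Let u be a classical solution of ∂_t u = Δu + f(t,u) on (0,∞)×ℝ^N whose initial datum u₀ is nonnegative, continuous, not identically zero, and supported in the open ball B_δ, and assume u satisfies the invasion property with level Z. Then for every θ ∈ (0,Z) there exists t₀ > 0 such that for all t ≥ t₀ one has 0 ≤ ℛ^e_θ(t) − ℛ^i_θ(t) ≤ δπ. -/
open Filter Metric Set
open scoped ENNReal NNReal

/-- The Laplacian of a function on Euclidean space, as the sum of second partial
derivatives in the coordinate directions. -/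
noncomputable def laplacian {N : ℕ} (φ : EuclideanSpace ℝ (Fin N) → ℝ)
    (x : EuclideanSpace ℝ (Fin N)) : ℝ :=
  ∑ i : Fin N, fderiv ℝ (fun y => fderiv ℝ φ y (EuclideanSpace.single i (1:ℝ))) x
    (EuclideanSpace.single i (1:ℝ))

/-- Standing assumptions: `f (t, z)` is Hölder continuous in `t`, Lipschitz continuous
in `z` uniformly in `t`, and `f (t, 0) = 0` for all `t > 0`. -/
def StandingAssumptions (f : ℝ → ℝ → ℝ) : Prop :=
  (∃ a : ℝ, 0 < a ∧ a ≤ 1 ∧ ∃ C : ℝ, ∀ z : ℝ, ∀ t ∈ Set.Ioi (0:ℝ), ∀ s ∈ Set.Ioi (0:ℝ),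
    |f t z - f s z| ≤ C * |t - s| ^ a) ∧
  (∃ L : ℝ≥0, ∀ t > (0:ℝ), LipschitzWith L (fun z => f t z)) ∧
  (∀ t > (0:ℝ), f t 0 = 0)

/-- A classical solution of `∂ₜ u = Δu + f(t,u)` on `(0,∞) × ℝᴺ` with initial datum `u₀`:
continuous on `[0,∞) × ℝᴺ`, bounded on `[0,T] × ℝᴺ` for every `T > 0`, `C¹` in `t` and
`C²` in `x` for `t > 0`, satisfying the equation pointwise for `t > 0`, and `u(0,·) = u₀`. -/
structure IsClassicalSolution {N : ℕ} (f : ℝ → ℝ → ℝ)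
    (u : ℝ → EuclideanSpace ℝ (Fin N) → ℝ)
    (u₀ : EuclideanSpace ℝ (Fin N) → ℝ) : Prop where
  cont : ContinuousOn (Function.uncurry u)
    (Set.Ici (0:ℝ) ×ˢ (Set.univ : Set (EuclideanSpace ℝ (Fin N))))
  bounded : ∀ T > (0:ℝ), ∃ C : ℝ, ∀ t ∈ Set.Icc (0:ℝ) T, ∀ x, |u t x| ≤ C
  time_diff : ∀ x, ∀ t > (0:ℝ), DifferentiableAt ℝ (fun s => u s x) t
  space_smooth : ∀ t > (0:ℝ), ContDiff ℝ 2 (u t)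
  eqn : ∀ t > (0:ℝ), ∀ x, deriv (fun s => u s x) t = laplacian (u t) x + f t (u t x)
  init : u 0 = u₀

/-- Invasion property with level `Z ∈ (0, +∞]`: for every compact `K`,
`liminf_{t→∞} min_{x ∈ K} u (t, x) ≥ Z`, i.e. for every real `z` (strictly) below `Z`,
eventually `u (t, ·) ≥ z` on `K`. -/
def Invades {N : ℕ} (u : ℝ → EuclideanSpace ℝ (Fin N) → ℝ) (Z : ℝ≥0∞) : Prop :=
  ∀ z : ℝ, ENNReal.ofReal z < Z →
    ∀ K : Set (EuclideanSpace ℝ (Fin N)), IsCompact K →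
      ∃ t₀ : ℝ, ∀ t ≥ t₀, ∀ x ∈ K, z ≤ u t x

/-- The upper level set `U_θ(t) = {x : u (t, x) > θ}`. -/
def upperLevelSet {N : ℕ} (u : ℝ → EuclideanSpace ℝ (Fin N) → ℝ) (θ t : ℝ) :
    Set (EuclideanSpace ℝ (Fin N)) := {x | θ < u t x}

/-- The inner radius `ℛⁱ_θ(t)`: the supremum of radii of balls contained in the upper
level set `U_θ(t)`. -/
noncomputable def innerRadius {N : ℕ} (u : ℝ → EuclideanSpace ℝ (Fin N) → ℝ)
    (θ t : ℝ) : ℝ :=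
  sSup {r : ℝ | ∃ x₀, ∀ x ∈ Metric.ball x₀ r, θ < u t x}

/-- The outer radius `ℛᵉ_θ(t)`: the infimum of radii of balls containing the upper
level set `U_θ(t)`. -/
noncomputable def outerRadius {N : ℕ} (u : ℝ → EuclideanSpace ℝ (Fin N) → ℝ)
    (θ t : ℝ) : ℝ :=
  sInf {r : ℝ | 0 < r ∧ ∃ x₀, ∀ x ∉ Metric.ball x₀ r, u t x ≤ θ}

/-- The centered inscribed radius `r_θ(t)`: the supremum of radii `r` such that
`u (t, ·) > θ` on the centered ball `B_r(0)` (equal to `0` if no positive `r` works). -/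
noncomputable def centeredRadius {N : ℕ} (u : ℝ → EuclideanSpace ℝ (Fin N) → ℝ)
    (θ t : ℝ) : ℝ :=
  sSup {r : ℝ | ∀ x : EuclideanSpace ℝ (Fin N), ‖x‖ < r → θ < u t x}

/-- Hypothesis (f≥g): `f(t,z) ≥ g(z)` with `g` continuous, `g ≤ 0` on `(0,θ₀)`,
`g > 0` on `(θ₀,Z)` and `∫₀^Z g > 0`. -/
def HypFG (f : ℝ → ℝ → ℝ) (g : ℝ → ℝ) (θ₀ Z : ℝ) : Prop :=
  ContinuousOn g (Set.Ici 0) ∧ (∀ t ≥ (0:ℝ), ∀ z ≥ (0:ℝ), g z ≤ f t z) ∧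
  0 < θ₀ ∧ θ₀ < Z ∧ (∀ z ∈ Set.Ioo 0 θ₀, g z ≤ 0) ∧ (∀ z ∈ Set.Ioo θ₀ Z, 0 < g z) ∧
  0 < ∫ z in (0:ℝ)..Z, g z

/-- Hypothesis (KPP): `inf_{t>0} f(t,z) > 0` for every `z ∈ (0,Z)` and
`z ↦ f(t,z)/z` is nonincreasing on `(0,∞)` for every `t > 0`. -/
def HypKPP (f : ℝ → ℝ → ℝ) (Z : ℝ) : Prop :=
  0 < Z ∧ (∀ z ∈ Set.Ioo 0 Z, ∃ ε > (0:ℝ), ∀ t > (0:ℝ), ε ≤ f t z) ∧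
  (∀ t > (0:ℝ), AntitoneOn (fun z => f t z / z) (Set.Ioi 0))

/-!
Let `σ` be the reflection exchanging two points `x` and `y`. On the half-space of points closer
to `y`, the function `u(t, z) - u(t, σ z)` satisfies a linear parabolic inequality, vanishes on
the bisecting hyperplane, and is initially nonnegative as soon as `u₀` vanishes on the other
half-space; the maximum principle then gives `u(t, x) ≤ u(t, y)`. When `supp u₀ ⊆ B_δ` this
holds whenever `‖y‖ + 2δ ≤ ‖x‖`. So if `ρ` is the supremum of `‖x‖` over the level set
`U_θ(t)` (nonempty for large `t` by invasion), then `B_{ρ - 2δ} ⊆ U_θ(t) ⊆ B̄_ρ`, whence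
`0 ≤ ℛᵉ - ℛⁱ ≤ 2δ ≤ πδ`. If `U_θ(t)` is unbounded it is the whole space, and both radii take
the junk value `0` of `sSup` of an unbounded set and `sInf ∅`.
-/

open scoped Laplacian Topology

theorem deriv_deriv_nonneg_of_isLocalMin {g : ℝ → ℝ} {a : ℝ} (hmin : IsLocalMin g a)
    (hc : ContinuousAt g a) : 0 ≤ deriv (deriv g) a := by
  by_contra! hneg
  -- by the second-derivative test `a` is also a local maximum, so `g` is locally constant
  have hmax := isLocalMax_of_deriv_deriv_neg hneg hmin.deriv_eq_zero hc
  have hconst : g =ᶠ[𝓝 a] fun _ => g a :=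
    (hmin.and hmax).mono fun _ h => le_antisymm h.2 h.1
  have hderiv : deriv g =ᶠ[𝓝 a] fun _ => 0 :=
    hconst.eventuallyEq_nhds.mono fun _ h => h.deriv_eq.trans (deriv_const _ _)
  rw [hderiv.deriv_eq, deriv_const] at hneg
  exact hneg.false

theorem deriv_nonpos_of_isMinOn_Icc {g : ℝ → ℝ} {a b : ℝ} (hab : a < b)
    (hmin : IsMinOn g (Icc a b) b) (hg : DifferentiableAt ℝ g b) : deriv g b ≤ 0 := by
  have hseg : segment ℝ b a ⊆ Icc a b :=
    (convex_Icc a b).segment_subset (right_mem_Icc.2 hab.le) (left_mem_Icc.2 hab.le)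
  have h := hmin.localize.hasFDerivWithinAt_nonneg hg.hasDerivAt.hasFDerivAt.hasFDerivWithinAt
    (sub_mem_posTangentConeAt_of_segment_subset hseg)
  rw [ContinuousLinearMap.toSpanSingleton_apply, smul_eq_mul] at h
  nlinarith

theorem deriv_deriv_comp_add_smul {E : Type*} [NormedAddCommGroup E] [NormedSpace ℝ E]
    {φ : E → ℝ} (hφ : ContDiff ℝ 2 φ) (x v : E) :
    deriv (deriv fun r : ℝ => φ (x + r • v)) 0 = iteratedFDeriv ℝ 2 φ x ![v, v] := by
  have hline : (fun r : ℝ => φ (x + r • v)) =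
      (fun z => φ (x + z)) ∘ ContinuousLinearMap.toSpanSingleton ℝ v := by
    funext r; simp
  have hφx : ContDiff ℝ 2 (fun z => φ (x + z)) := hφ.comp (contDiff_const.add contDiff_id)
  rw [← iteratedDeriv_one, ← iteratedDeriv_succ', iteratedDeriv_eq_iteratedFDeriv, hline,
    ContinuousLinearMap.iteratedFDeriv_comp_right _ hφx 0 le_rfl, iteratedFDeriv_comp_add_left,
    map_zero, add_zero, ContinuousMultilinearMap.compContinuousLinearMap_apply]
  congr 1
  funext j; fin_cases j <;> simp

section Laplacian

variable {E : Type*} [NormedAddCommGroup E] [InnerProductSpace ℝ E] [FiniteDimensional ℝ E]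

theorem laplacian_nonneg_of_isLocalMin {φ : E → ℝ} (hφ : ContDiff ℝ 2 φ) {x : E}
    (hmin : IsLocalMin φ x) : 0 ≤ Δ φ x := by
  rw [InnerProductSpace.laplacian_eq_iteratedFDeriv_stdOrthonormalBasis]
  refine Finset.sum_nonneg fun i _ => ?_
  set v := stdOrthonormalBasis ℝ E i
  rw [← deriv_deriv_comp_add_smul hφ]
  have hline : Continuous fun r : ℝ => x + r • v := by fun_prop
  refine deriv_deriv_nonneg_of_isLocalMin ?_ (hφ.continuous.comp hline).continuousAt
  exact IsLocalMin.comp_continuous (g := fun r : ℝ => x + r • v) (b := 0)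
    (by simpa using hmin) hline.continuousAt

theorem laplacian_comp_affineIsometryEquiv {φ : E → ℝ} (hφ : ContDiff ℝ 2 φ)
    (σ : E ≃ᵃⁱ[ℝ] E) (x : E) : Δ (φ ∘ σ) x = Δ φ (σ x) := by
  set A := σ.linearIsometryEquiv
  set A' : E →L[ℝ] E := A.toContinuousLinearEquiv.toContinuousLinearMap
  have hσ : φ ∘ σ = (fun z => φ (z + σ 0)) ∘ A' := by
    funext z; simpa [A'] using congrArg φ (σ.map_vadd 0 z)
  have hx : A' x + σ 0 = σ x := by simpa [A'] using (σ.map_vadd 0 x).symm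
  -- `A` carries the standard orthonormal basis to another orthonormal basis
  set b := stdOrthonormalBasis ℝ E
  rw [hσ, InnerProductSpace.laplacian_eq_iteratedFDeriv_orthonormalBasis _ b,
    InnerProductSpace.laplacian_eq_iteratedFDeriv_orthonormalBasis _ (b.map A)]
  refine Finset.sum_congr rfl fun i _ => ?_
  have hφσ : ContDiff ℝ 2 (fun z => φ (z + σ 0)) := hφ.comp (contDiff_id.add contDiff_const)
  rw [ContinuousLinearMap.iteratedFDeriv_comp_right _ hφσ x le_rfl,
    iteratedFDeriv_comp_add_right, ContinuousMultilinearMap.compContinuousLinearMap_apply, hx]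
  congr 1
  funext j; fin_cases j <;> simp [A']

theorem laplacian_one_add_norm_sq (x : E) :
    Δ (fun y : E => (1 + ‖y‖ ^ 2 : ℝ)) x = 2 * (Module.finrank ℝ E : ℝ) := by
  have hfd : fderiv ℝ (fun y : E => 1 + ‖y‖ ^ 2) = ⇑(2 • innerSL ℝ : E →L[ℝ] E →L[ℝ] ℝ) := by
    funext y
    exact ((hasStrictFDerivAt_norm_sq y).hasFDerivAt.const_add 1).fderiv
  set b := stdOrthonormalBasis ℝ E
  have hunit : ∀ i, (2 : ℝ) * innerSL ℝ (b i) (b i) = 2 := fun i => by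
    rw [innerSL_apply_apply, real_inner_self_eq_norm_sq, b.norm_eq_one]; ring
  rw [InnerProductSpace.laplacian_eq_iteratedFDeriv_orthonormalBasis _ b]
  simp_rw [iteratedFDeriv_two_apply, hfd, ContinuousLinearMap.fderiv]
  simp [hunit, mul_comm]

end Laplacian

theorem laplacian_eq_laplacian {N : ℕ} {φ : EuclideanSpace ℝ (Fin N) → ℝ}
    {x : EuclideanSpace ℝ (Fin N)} (hφ : ContDiffAt ℝ 2 φ x) :
    laplacian φ x = Δ φ x := by
  have hd : DifferentiableAt ℝ (fderiv ℝ φ) x :=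
    (hφ.fderiv_right (m := 1) (by norm_num)).differentiableAt one_ne_zero
  rw [InnerProductSpace.laplacian_eq_iteratedFDeriv_orthonormalBasis φ
    (EuclideanSpace.basisFun (Fin N) ℝ)]
  refine Finset.sum_congr rfl fun i _ => ?_
  rw [iteratedFDeriv_two_apply, fderiv_clm_apply hd (differentiableAt_const _)]
  simp

section Barrier

variable {E : Type*} [NormedAddCommGroup E] {α : ℝ}

noncomputable def parabolicBarrier (α s : ℝ) (x : E) : ℝ := Real.exp (α * s) * (1 + ‖x‖ ^ 2)

theorem continuous_parabolicBarrier :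
    Continuous (Function.uncurry (parabolicBarrier (E := E) α)) := by
  unfold parabolicBarrier; fun_prop

theorem exp_le_parabolicBarrier (s : ℝ) (x : E) : Real.exp (α * s) ≤ parabolicBarrier α s x :=
  le_mul_of_one_le_right (Real.exp_pos _).le (by nlinarith [norm_nonneg x])

theorem parabolicBarrier_pos (s : ℝ) (x : E) : 0 < parabolicBarrier α s x :=
  (Real.exp_pos _).trans_le (exp_le_parabolicBarrier s x)

theorem norm_le_parabolicBarrier (hα : 0 ≤ α) {s : ℝ} (hs : 0 ≤ s) (x : E) :
    ‖x‖ ≤ parabolicBarrier α s x :=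
  calc ‖x‖ ≤ 1 + ‖x‖ ^ 2 := by nlinarith [sq_nonneg (‖x‖ - 1)]
    _ ≤ parabolicBarrier α s x :=
      le_mul_of_one_le_left (by positivity) (Real.one_le_exp (mul_nonneg hα hs))

theorem hasDerivAt_parabolicBarrier (s : ℝ) (x : E) :
    HasDerivAt (fun τ => parabolicBarrier α τ x) (α * parabolicBarrier α s x) s := by
  have h := ((Real.hasDerivAt_exp _).comp s ((hasDerivAt_id s).const_mul α)).mul_const
    (1 + ‖x‖ ^ 2)
  exact h.congr_deriv (by simp only [parabolicBarrier, id, mul_one]; ring)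

variable [InnerProductSpace ℝ E]

theorem contDiff_parabolicBarrier (s : ℝ) : ContDiff ℝ 2 (parabolicBarrier (E := E) α s) :=
  contDiff_const.mul (contDiff_const.add (contDiff_norm_sq ℝ))

theorem laplacian_parabolicBarrier [FiniteDimensional ℝ E] (s : ℝ) (x : E) :
    Δ (parabolicBarrier (E := E) α s) x = Real.exp (α * s) * (2 * Module.finrank ℝ E) := by
  have hQ : ContDiffAt ℝ 2 (fun y : E => (1 + ‖y‖ ^ 2 : ℝ)) x :=
    (contDiff_const.add (contDiff_norm_sq ℝ)).contDiffAt
  rw [show parabolicBarrier α s = Real.exp (α * s) • fun y : E => (1 + ‖y‖ ^ 2 : ℝ) from rfl,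
    InnerProductSpace.laplacian_smul _ hQ, laplacian_one_add_norm_sq, smul_eq_mul]

end Barrier

theorem exists_first_zero {X : Type*} [MetricSpace X] [ProperSpace X] {T : ℝ} {U Ω : Set X}
    {v : ℝ → X → ℝ} (hΩ : IsClosed Ω) (hcont : ContinuousOn (Function.uncurry v) (Icc 0 T ×ˢ Ω))
    (hbdd : Bornology.IsBounded {p ∈ Icc 0 T ×ˢ Ω | v p.1 p.2 ≤ 0})
    (hinit : ∀ x ∈ Ω, 0 < v 0 x) (hbdry : ∀ s ∈ Icc 0 T, ∀ x ∈ Ω \ U, 0 < v s x)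
    {s : ℝ} (hs : s ∈ Icc 0 T) {x : X} (hx : x ∈ Ω) (hle : v s x ≤ 0) :
    ∃ t₁ ∈ Ioc 0 T, ∃ x₁ ∈ U, v t₁ x₁ = 0 ∧ (∀ y ∈ Ω, 0 ≤ v t₁ y) ∧
      ∀ τ ∈ Ico 0 t₁, 0 < v τ x₁ := by
  set S := {p ∈ Icc 0 T ×ˢ Ω | v p.1 p.2 ≤ 0}
  have hSc : IsCompact S := Metric.isCompact_of_isClosed_isBounded
    (hcont.preimage_isClosed_of_isClosed (isClosed_Icc.prod hΩ) isClosed_Iic) hbdd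
  obtain ⟨⟨t₁, x₁⟩, ⟨⟨ht₁, hx₁⟩, hv₁⟩, hfirst⟩ :=
    hSc.exists_isMinOn ⟨(s, x), ⟨hs, hx⟩, hle⟩ continuous_fst.continuousOn
  have hIco : Ico 0 t₁ ⊆ Icc 0 T := fun τ hτ => ⟨hτ.1, hτ.2.le.trans ht₁.2⟩
  have hbefore : ∀ τ ∈ Ico 0 t₁, ∀ y ∈ Ω, 0 < v τ y := by
    intro τ hτ y hy
    by_contra! h
    exact (show t₁ ≤ τ from hfirst (show (τ, y) ∈ S from ⟨⟨hIco hτ, hy⟩, h⟩)).not_gt hτ.2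
  have ht₁pos : 0 < t₁ := by
    refine ht₁.1.lt_of_ne fun h => ?_
    rw [← h] at hv₁
    exact (hinit x₁ hx₁).not_ge hv₁
  have hge : ∀ y ∈ Ω, 0 ≤ v t₁ y := by
    intro y hy
    have hslice : ContinuousOn (fun τ => v τ y) (Icc 0 T) :=
      hcont.comp (continuous_id.prodMk continuous_const).continuousOn fun τ hτ => ⟨hτ, hy⟩
    refine ContinuousWithinAt.closure_le (f := fun _ => 0) (g := fun τ => v τ y) ?_
      continuousWithinAt_const ((hslice.continuousWithinAt ht₁).mono hIco)
      fun τ hτ => (hbefore τ hτ y hy).le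
    rw [closure_Ico ht₁pos.ne]
    exact right_mem_Icc.2 ht₁pos.le
  have hx₁U : x₁ ∈ U := by
    by_contra h
    exact (hbdry t₁ ht₁ x₁ ⟨hx₁, h⟩).not_ge hv₁
  exact ⟨t₁, ⟨ht₁pos, ht₁.2⟩, x₁, hx₁U, le_antisymm hv₁ (hge x₁ hx₁), hge,
    fun τ hτ => hbefore τ hτ x₁ hx₁⟩

section MaximumPrinciple

variable {E : Type*} [NormedAddCommGroup E] [InnerProductSpace ℝ E] [FiniteDimensional ℝ E]

theorem parabolic_pos_of_laplacian_lt_deriv {T : ℝ} {U Ω : Set E} {v : ℝ → E → ℝ}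
    (hU : IsOpen U) (hΩ : IsClosed Ω) (hUΩ : U ⊆ Ω)
    (hcont : ContinuousOn (Function.uncurry v) (Icc 0 T ×ˢ Ω))
    (hbdd : Bornology.IsBounded {p ∈ Icc 0 T ×ˢ Ω | v p.1 p.2 ≤ 0})
    (hinit : ∀ x ∈ Ω, 0 < v 0 x) (hbdry : ∀ s ∈ Icc 0 T, ∀ x ∈ Ω \ U, 0 < v s x)
    (htime : ∀ s ∈ Ioc 0 T, ∀ x ∈ U, DifferentiableAt ℝ (fun τ => v τ x) s)
    (hspace : ∀ s ∈ Ioc 0 T, ContDiff ℝ 2 (v s))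
    (hstrict : ∀ s ∈ Ioc 0 T, ∀ x ∈ U, v s x = 0 → Δ (v s) x < deriv (fun τ => v τ x) s) :
    ∀ s ∈ Icc 0 T, ∀ x ∈ Ω, 0 < v s x := by
  intro s hs x hx
  by_contra! hle
  -- at the first zero of `v`, `Δ v ≥ 0` (spatial minimum) and `∂ₜ v ≤ 0` (reached from above)
  obtain ⟨t₁, ht₁, x₁, hx₁, hzero, hge, hbefore⟩ :=
    exists_first_zero hΩ hcont hbdd hinit hbdry hs hx hle
  have hlap : 0 ≤ Δ (v t₁) x₁ := by
    refine laplacian_nonneg_of_isLocalMin (hspace t₁ ht₁) ?_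
    filter_upwards [hU.mem_nhds hx₁] with y hy
    rw [hzero]
    exact hge y (hUΩ hy)
  have hderiv : deriv (fun τ => v τ x₁) t₁ ≤ 0 := by
    refine deriv_nonpos_of_isMinOn_Icc ht₁.1 (fun τ hτ => ?_) (htime t₁ ht₁ x₁ hx₁)
    rcases hτ.2.lt_or_eq with hτt₁ | rfl
    · simpa [hzero] using (hbefore τ ⟨hτ.1, hτt₁⟩).le
    · exact le_refl (v τ x₁)
  linarith [hstrict t₁ ht₁ x₁ hx₁ hzero]

/- With `α ≥ L + 2 dim E + 1`, the growth `α ε e^{α s}(1 + ‖x‖²)` of the barrier in time beats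
both its Laplacian `2 dim E · ε e^{α s}` and the zeroth-order term `L |w|` at a zero of the sum. -/
theorem laplacian_lt_deriv_add_parabolicBarrier {L ε α : ℝ} (hε : 0 < ε)
    (hα : L + 2 * Module.finrank ℝ E + 1 ≤ α) {w : ℝ → E → ℝ} {s : ℝ} {x : E}
    (hw : ContDiff ℝ 2 (w s)) (hwt : DifferentiableAt ℝ (fun τ => w τ x) s)
    (hpde : Δ (w s) x - L * |w s x| ≤ deriv (fun τ => w τ x) s)
    (hzero : w s x + ε * parabolicBarrier α s x = 0) :
    Δ (w s + ε • parabolicBarrier (E := E) α s) x <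
      deriv (fun τ => w τ x + ε * parabolicBarrier α τ x) s := by
  set B := parabolicBarrier α s x
  have hB : 0 < ε * B := mul_pos hε (parabolicBarrier_pos s x)
  have hΔ : Δ (w s + ε • parabolicBarrier (E := E) α s) x =
      Δ (w s) x + ε * (Real.exp (α * s) * (2 * Module.finrank ℝ E)) := by
    rw [hw.contDiffAt.laplacian_add (f₂ := ε • parabolicBarrier α s)
        ((contDiff_parabolicBarrier s).const_smul ε).contDiffAt,
      InnerProductSpace.laplacian_smul _ (contDiff_parabolicBarrier s).contDiffAt,
      laplacian_parabolicBarrier, smul_eq_mul]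
  have hderiv : deriv (fun τ => w τ x + ε * parabolicBarrier α τ x) s =
      deriv (fun τ => w τ x) s + ε * (α * B) :=
    (hwt.hasDerivAt.fun_add ((hasDerivAt_parabolicBarrier s x).const_mul ε)).deriv
  rw [show w s x = -(ε * B) by linarith, abs_neg, abs_of_pos hB] at hpde
  have hexp : ε * (Real.exp (α * s) * (2 * Module.finrank ℝ E)) ≤
      ε * (B * (2 * Module.finrank ℝ E)) := by
    gcongr; exact exp_le_parabolicBarrier s x
  rw [hΔ, hderiv]
  nlinarith [mul_le_mul_of_nonneg_right hα hB.le]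

theorem parabolic_nonneg_of_laplacian_sub_le_deriv {T L : ℝ} (hL : 0 ≤ L) {U Ω : Set E}
    {w : ℝ → E → ℝ} (hU : IsOpen U) (hΩ : IsClosed Ω) (hUΩ : U ⊆ Ω)
    (hcont : ContinuousOn (Function.uncurry w) (Icc 0 T ×ˢ Ω))
    (hbdd : BddBelow (Function.uncurry w '' (Icc 0 T ×ˢ Ω)))
    (hinit : ∀ x ∈ Ω, 0 ≤ w 0 x) (hbdry : ∀ s ∈ Icc 0 T, ∀ x ∈ Ω \ U, 0 ≤ w s x)
    (htime : ∀ s ∈ Ioc 0 T, ∀ x ∈ U, DifferentiableAt ℝ (fun τ => w τ x) s)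
    (hspace : ∀ s ∈ Ioc 0 T, ContDiff ℝ 2 (w s))
    (hpde : ∀ s ∈ Ioc 0 T, ∀ x ∈ U, Δ (w s) x - L * |w s x| ≤ deriv (fun τ => w τ x) s) :
    ∀ s ∈ Icc 0 T, ∀ x ∈ Ω, 0 ≤ w s x := by
  obtain ⟨C, hC⟩ := hbdd
  set α : ℝ := L + 2 * Module.finrank ℝ E + 1
  have hα : 0 ≤ α := by positivity
  set B := parabolicBarrier (E := E) α
  have hpert : ∀ ε > 0, ∀ s ∈ Icc 0 T, ∀ x ∈ Ω, 0 < w s x + ε * B s x := by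
    intro ε hε
    have hεB : ∀ s x, 0 < ε * B s x := fun s x => mul_pos hε (parabolicBarrier_pos s x)
    refine parabolic_pos_of_laplacian_lt_deriv (v := fun s => w s + ε • B s) hU hΩ hUΩ
      (hcont.add (continuous_const.mul continuous_parabolicBarrier).continuousOn) ?_
      (fun x hx => add_pos_of_nonneg_of_pos (hinit x hx) (hεB 0 x))
      (fun s hs x hx => add_pos_of_nonneg_of_pos (hbdry s hs x hx) (hεB s x))
      (fun s hs x hx => (htime s hs x hx).add
        ((hasDerivAt_parabolicBarrier s x).differentiableAt.const_mul ε))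
      (fun s hs => (hspace s hs).add ((contDiff_parabolicBarrier s).const_smul ε))
      (fun s hs x hx hzero => laplacian_lt_deriv_add_parabolicBarrier hε le_rfl (hspace s hs)
        (htime s hs x hx) (hpde s hs x hx) hzero)
    refine ((Metric.isBounded_Icc 0 T).prod (Metric.isBounded_closedBall (x := 0)
      (r := -C / ε))).subset ?_
    rintro ⟨s, y⟩ ⟨⟨hs, hy⟩, hle⟩
    have hwC : C ≤ w s y := hC ⟨(s, y), ⟨hs, hy⟩, rfl⟩
    have hle' : w s y + ε * B s y ≤ 0 := hle
    have hnorm := norm_le_parabolicBarrier (E := E) hα hs.1 y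
    refine ⟨hs, ?_⟩
    rw [mem_closedBall, dist_zero_right, le_div_iff₀ hε]
    nlinarith
  intro s hs x hx
  have hB := parabolicBarrier_pos (E := E) (α := α) s x
  by_contra! hneg
  have h := hpert (-w s x / B s x) (div_pos (neg_pos.2 hneg) hB) s hs x hx
  rw [div_mul_cancel₀ _ hB.ne'] at h
  linarith

end MaximumPrinciple

open EuclideanGeometry AffineSubspace in
theorem exists_affineIsometryEquiv_swap {E : Type*} [NormedAddCommGroup E]
    [InnerProductSpace ℝ E] [FiniteDimensional ℝ E] (x y : E) :
    ∃ σ : E ≃ᵃⁱ[ℝ] E, σ x = y ∧ σ y = x ∧ ∀ z, dist z x = dist z y → σ z = z := by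
  have : Nonempty (perpBisector x y) := (perpBisector_nonempty (p₁ := x) (p₂ := y)).to_subtype
  set σ := reflection (perpBisector x y)
  have hfix : ∀ z, dist z x = dist z y → σ z = z := fun z hz =>
    (reflection_eq_self_iff z).2 (mem_perpBisector_iff_dist_eq.2 hz)
  have hxy : σ x = y := by
    have hv : x - midpoint ℝ x y ∈ (perpBisector x y).directionᗮ := by
      rw [direction_perpBisector]
      refine Submodule.le_orthogonal_orthogonal _ (Submodule.mem_span_singleton.2 ⟨-2⁻¹, ?_⟩)
      simp [midpoint_eq_smul_add]
      module
    have h := reflection_orthogonal_vadd (midpoint_mem_perpBisector x y) hv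
    simp only [vadd_eq_add, sub_add_cancel] at h
    rw [h, midpoint_eq_smul_add, invOf_eq_inv]
    module
  exact ⟨σ, hxy, by rw [← hxy, reflection_reflection], hfix⟩

namespace IsClassicalSolution

variable {N : ℕ} {f : ℝ → ℝ → ℝ} {u : ℝ → EuclideanSpace ℝ (Fin N) → ℝ}
  {u₀ : EuclideanSpace ℝ (Fin N) → ℝ}

theorem deriv_eq_laplacian_add (hu : IsClassicalSolution f u u₀) {t : ℝ} (ht : 0 < t)
    (x : EuclideanSpace ℝ (Fin N)) :
    deriv (fun s => u s x) t = Δ (u t) x + f t (u t x) := by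
  rw [hu.eqn t ht x, laplacian_eq_laplacian (hu.space_smooth t ht).contDiffAt]

theorem laplacian_sub_le_deriv_sub_comp (hu : IsClassicalSolution f u u₀) {L : ℝ≥0}
    (hf : ∀ t > (0:ℝ), LipschitzWith L (fun z => f t z))
    (σ : EuclideanSpace ℝ (Fin N) ≃ᵃⁱ[ℝ] EuclideanSpace ℝ (Fin N)) {t : ℝ} (ht : 0 < t)
    (x : EuclideanSpace ℝ (Fin N)) :
    Δ (u t - u t ∘ σ) x - L * |u t x - u t (σ x)| ≤ deriv (fun s => u s x - u s (σ x)) t := by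
  have hσ : ContDiff ℝ 2 σ := σ.toContinuousAffineEquiv.toContinuousAffineMap.contDiff
  have hut := hu.space_smooth t ht
  rw [hut.contDiffAt.laplacian_sub (hut.comp hσ).contDiffAt,
    laplacian_comp_affineIsometryEquiv hut, deriv_fun_sub (hu.time_diff x t ht)
    (hu.time_diff (σ x) t ht), hu.deriv_eq_laplacian_add ht, hu.deriv_eq_laplacian_add ht]
  have hlip := (hf t ht).dist_le_mul (u t x) (u t (σ x))
  rw [Real.dist_eq, Real.dist_eq] at hlip
  linarith [neg_abs_le (f t (u t x) - f t (u t (σ x)))]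

theorem continuousOn_sub_comp (hu : IsClassicalSolution f u u₀)
    {g : EuclideanSpace ℝ (Fin N) → EuclideanSpace ℝ (Fin N)} (hg : Continuous g) :
    ContinuousOn (Function.uncurry fun s => u s - u s ∘ g) (Ici 0 ×ˢ univ) :=
  hu.cont.sub (hu.cont.comp (continuous_fst.prodMk (hg.comp continuous_snd)).continuousOn
    fun _ hp => ⟨hp.1, mem_univ _⟩)

theorem bddBelow_sub_comp (hu : IsClassicalSolution f u u₀)
    (g : EuclideanSpace ℝ (Fin N) → EuclideanSpace ℝ (Fin N)) {T : ℝ} (hT : 0 < T) :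
    BddBelow (Function.uncurry (fun s => u s - u s ∘ g) '' (Icc 0 T ×ˢ univ)) := by
  obtain ⟨C, hC⟩ := hu.bounded T hT
  refine ⟨-(C + C), ?_⟩
  rintro _ ⟨⟨s, z⟩, ⟨hs, -⟩, rfl⟩
  have h₁ := abs_le.1 (hC s hs z)
  have h₂ := abs_le.1 (hC s hs (g z))
  show -(C + C) ≤ u s z - u s (g z)
  linarith

theorem apply_le_apply_of_initial_eq_zero (hu : IsClassicalSolution f u u₀) {L : ℝ≥0}
    (hf : ∀ t > (0:ℝ), LipschitzWith L (fun z => f t z)) (hu₀ : ∀ x, 0 ≤ u₀ x)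
    {x y : EuclideanSpace ℝ (Fin N)} (hxy : ∀ z, dist z x < dist z y → u₀ z = 0)
    {t : ℝ} (ht : 0 < t) : u t x ≤ u t y := by
  obtain ⟨σ, hσx, hσy, hfix⟩ := exists_affineIsometryEquiv_swap x y
  have hσ : ContDiff ℝ 2 σ := σ.toContinuousAffineEquiv.toContinuousAffineMap.contDiff
  have hdist_x : ∀ z, dist (σ z) x = dist z y := fun z => by rw [← hσy, σ.dist_map]
  have hdist_y : ∀ z, dist (σ z) y = dist z x := fun z => by rw [← hσx, σ.dist_map]
  set w : ℝ → EuclideanSpace ℝ (Fin N) → ℝ := fun s => u s - u s ∘ σ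
  set Ω := {z | dist z y ≤ dist z x}
  have hinit : ∀ z ∈ Ω, 0 ≤ w 0 z := by
    intro z hz
    show 0 ≤ u 0 z - u 0 (σ z)
    rw [hu.init]
    rcases (hdist_x z ▸ hdist_y z ▸ hz : dist (σ z) x ≤ dist (σ z) y).lt_or_eq with h | h
    · rw [hxy _ h, sub_zero]; exact hu₀ z
    · rw [hfix z (by rw [← hdist_x, ← hdist_y, h]), sub_self]
  have hcont := hu.continuousOn_sub_comp σ.continuous
  have hbdd := hu.bddBelow_sub_comp σ ht
  have hw := parabolic_nonneg_of_laplacian_sub_le_deriv L.coe_nonneg (w := w)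
    (U := {z | dist z y < dist z x}) (Ω := Ω)
    (isOpen_lt (continuous_id.dist continuous_const) (continuous_id.dist continuous_const))
    (isClosed_le (continuous_id.dist continuous_const) (continuous_id.dist continuous_const))
    (fun z (hz : dist z y < dist z x) => hz.le)
    (hcont.mono (prod_mono Icc_subset_Ici_self (subset_univ _)))
    (hbdd.mono (image_mono (prod_mono le_rfl (subset_univ _)))) hinit
    (fun s _ z hz => by
      show 0 ≤ u s z - u s (σ z)
      rw [hfix z (le_antisymm (not_lt.1 hz.2) hz.1), sub_self])
    (fun s hs z _ => (hu.time_diff z s hs.1).sub (hu.time_diff (σ z) s hs.1))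
    (fun s hs => (hu.space_smooth s hs.1).sub ((hu.space_smooth s hs.1).comp hσ))
    (fun s hs z _ => hu.laplacian_sub_le_deriv_sub_comp hf σ hs.1 z)
    t ⟨ht.le, le_rfl⟩ y (by simp [Ω])
  have hwy : 0 ≤ u t y - u t (σ y) := hw
  rw [hσy] at hwy
  linarith

theorem apply_le_apply_of_norm_add_le (hu : IsClassicalSolution f u u₀) {L : ℝ≥0}
    (hf : ∀ t > (0:ℝ), LipschitzWith L (fun z => f t z)) (hu₀ : ∀ x, 0 ≤ u₀ x) {δ : ℝ}
    (hsupp : Function.support u₀ ⊆ ball 0 δ) {x y : EuclideanSpace ℝ (Fin N)}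
    (hxy : ‖y‖ + 2 * δ ≤ ‖x‖) {t : ℝ} (ht : 0 < t) : u t x ≤ u t y := by
  refine hu.apply_le_apply_of_initial_eq_zero hf hu₀ (fun z hz => ?_) ht
  by_contra hz₀
  have hzδ : ‖z‖ < δ := mem_ball_zero_iff.1 (hsupp hz₀)
  have hzy : dist z y ≤ ‖z‖ + ‖y‖ := by rw [dist_eq_norm]; exact norm_sub_le z y
  have hzx : ‖x‖ - ‖z‖ ≤ dist z x := by
    rw [dist_comm, dist_eq_norm]; exact norm_sub_norm_le x z
  linarith

end IsClassicalSolution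

theorem le_of_ball_subset_ball {E : Type*} [NormedAddCommGroup E] [NormedSpace ℝ E]
    [Nontrivial E] {x y : E} {r R : ℝ} (hr : 0 < r) (h : ball x r ⊆ ball y R) : r ≤ R := by
  have hR : 0 < R := pos_of_mem_ball (h (mem_ball_self hr))
  have hdiam := diam_mono h isBounded_ball
  rw [diam_ball_eq x hr.le, diam_ball_eq y hR.le] at hdiam
  linarith

section Radii

variable {N : ℕ} {u : ℝ → EuclideanSpace ℝ (Fin N) → ℝ} {θ t : ℝ}

theorem outerRadius_le {R : ℝ} (hR : 0 ≤ R) {x₀ : EuclideanSpace ℝ (Fin N)}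
    (hU : ∀ x, θ < u t x → dist x x₀ ≤ R) : outerRadius u θ t ≤ R := by
  refine le_of_forall_pos_le_add fun ε hε =>
    csInf_le ⟨0, fun r hr => hr.1.le⟩ ⟨by linarith, x₀, fun x hx => ?_⟩
  by_contra! hθ
  exact hx (mem_ball.2 ((hU x hθ).trans_lt (by linarith)))

theorem innerRadius_eq_zero_of_forall_lt (hU : ∀ x, θ < u t x) : innerRadius u θ t = 0 := by
  refine Real.sSup_of_not_bddAbove fun ⟨b, hb⟩ => ?_
  have := hb (show b + 1 ∈ _ from ⟨0, fun x _ => hU x⟩)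
  linarith

variable [Nontrivial (EuclideanSpace ℝ (Fin N))]

theorem outerRadius_eq_zero_of_forall_lt (hU : ∀ x, θ < u t x) : outerRadius u θ t = 0 := by
  refine (congrArg sInf (eq_empty_iff_forall_notMem.2 fun R hRmem => ?_)).trans Real.sInf_empty
  obtain ⟨hR, x₀, hR'⟩ := hRmem
  obtain ⟨x, hx⟩ := (NormedSpace.sphere_nonempty.2 hR.le : (sphere x₀ R).Nonempty)
  exact (hR' x (by simp [mem_sphere.1 hx])).not_gt (hU x)

theorem inscribed_radius_le_circumscribed {R : ℝ} {x₀ : EuclideanSpace ℝ (Fin N)}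
    (hR : 0 < R) (hU : ∀ x ∉ ball x₀ R, u t x ≤ θ) {r : ℝ} {x₁ : EuclideanSpace ℝ (Fin N)}
    (hr : ∀ x ∈ ball x₁ r, θ < u t x) : r ≤ R := by
  rcases le_or_gt r 0 with hr0 | hr0
  · linarith
  refine le_of_ball_subset_ball (x := x₁) (y := x₀) hr0 fun x hx => ?_
  by_contra hx₀
  exact (hU x hx₀).not_gt (hr x hx)

theorem innerRadius_le_outerRadius (hne : ∃ R > 0, ∃ x₀, ∀ x ∉ ball x₀ R, u t x ≤ θ) :
    innerRadius u θ t ≤ outerRadius u θ t := by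
  obtain ⟨R, hR, x₀, hU⟩ := hne
  refine le_csInf ⟨R, hR, x₀, hU⟩ fun R' ⟨hR', x₀', hU'⟩ => ?_
  refine csSup_le ⟨0, 0, fun x hx => absurd hx (by simp)⟩ fun r ⟨x₁, hr⟩ => ?_
  exact inscribed_radius_le_circumscribed hR' hU' hr

theorem le_innerRadius (hne : ∃ R > 0, ∃ x₀, ∀ x ∉ ball x₀ R, u t x ≤ θ) {r : ℝ}
    {x₁ : EuclideanSpace ℝ (Fin N)} (hr : ∀ x ∈ ball x₁ r, θ < u t x) :
    r ≤ innerRadius u θ t := by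
  obtain ⟨R, hR, x₀, hU⟩ := hne
  exact le_csSup ⟨R, fun r' ⟨x₁', hr'⟩ => inscribed_radius_le_circumscribed hR hU hr'⟩ ⟨x₁, hr⟩

theorem outerRadius_sub_innerRadius_le_of_norm_add_le {c : ℝ} (hc : 0 ≤ c)
    (hne : ∃ x, θ < u t x) (hmono : ∀ x y, ‖y‖ + c ≤ ‖x‖ → θ < u t x → θ < u t y) :
    0 ≤ outerRadius u θ t - innerRadius u θ t ∧
      outerRadius u θ t - innerRadius u θ t ≤ c := by
  set norms := norm '' upperLevelSet u θ t
  have hnorms : norms.Nonempty := hne.elim fun x hx => ⟨‖x‖, x, hx, rfl⟩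
  by_cases hB : BddAbove norms
  · set ρ := sSup norms
    have hρ : ∀ x, θ < u t x → dist x 0 ≤ ρ := fun x hx =>
      (dist_zero_right x).trans_le (le_csSup hB ⟨x, hx, rfl⟩)
    have hρ0 : 0 ≤ ρ := hne.elim fun x hx => dist_nonneg.trans (hρ x hx)
    have hout : ∃ R > 0, ∃ x₀, ∀ x ∉ ball x₀ R, u t x ≤ θ :=
      ⟨ρ + 1, by linarith, 0, fun x hx => not_lt.1 fun hθ =>
        hx (mem_ball.2 ((hρ x hθ).trans_lt (by linarith)))⟩
    have hin : ρ - c ≤ innerRadius u θ t := by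
      refine le_innerRadius hout (x₁ := 0) fun y hy => ?_
      rw [mem_ball, dist_zero_right] at hy
      obtain ⟨_, ⟨x, hx, rfl⟩, hlt⟩ := exists_lt_of_lt_csSup hnorms (by linarith : ‖y‖ + c < ρ)
      exact hmono x y hlt.le hx
    have hle := innerRadius_le_outerRadius hout
    have hout_le := outerRadius_le hρ0 hρ
    constructor <;> linarith
  · have hall : ∀ y, θ < u t y := fun y => by
      obtain ⟨_, ⟨x, hx, rfl⟩, hlt⟩ := not_bddAbove_iff.1 hB (‖y‖ + c)
      exact hmono x y hlt.le hx
    simp [innerRadius_eq_zero_of_forall_lt hall, outerRadius_eq_zero_of_forall_lt hall, hc]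

end Radii

theorem outerRadius_sub_innerRadius_le_general
    {N : ℕ} (hN : 0 < N) (f : ℝ → ℝ → ℝ) (hf : StandingAssumptions f)
    (δ : ℝ) (hδ : 0 < δ)
    (u₀ : EuclideanSpace ℝ (Fin N) → ℝ)
    (hu₀nn : ∀ x, 0 ≤ u₀ x)
    (hu₀supp : tsupport u₀ ⊆ Metric.ball 0 δ)
    (u : ℝ → EuclideanSpace ℝ (Fin N) → ℝ) (hu : IsClassicalSolution f u u₀)
    (Z : ℝ≥0∞) (hinv : Invades u Z)
    (θ : ℝ) (hθZ : ENNReal.ofReal θ < Z) :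
    ∃ t₀ > (0:ℝ), ∀ t ≥ t₀,
      0 ≤ outerRadius u θ t - innerRadius u θ t ∧
      outerRadius u θ t - innerRadius u θ t ≤ δ * Real.pi := by
  have : Nontrivial (EuclideanSpace ℝ (Fin N)) :=
    Module.nontrivial_of_finrank_pos (R := ℝ) (by rwa [finrank_euclideanSpace_fin])
  obtain ⟨L, hL⟩ := hf.2.1
  obtain ⟨z, -, hθz, hzZ⟩ := ENNReal.lt_iff_exists_real_btwn.1 hθZ
  obtain ⟨t₁, ht₁⟩ := hinv z hzZ {0} isCompact_singleton
  refine ⟨max t₁ 1, by positivity, fun t ht => ?_⟩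
  have ht₀ : 0 < t := zero_lt_one.trans_le ((le_max_right _ _).trans ht)
  have hθ0 : θ < u t 0 := (ENNReal.ofReal_lt_ofReal_iff'.1 hθz).1.trans_le
    (ht₁ t ((le_max_left _ _).trans ht) 0 rfl)
  have hmono : ∀ x y, ‖y‖ + 2 * δ ≤ ‖x‖ → θ < u t x → θ < u t y := fun x y hxy hx =>
    hx.trans_le (hu.apply_le_apply_of_norm_add_le hL hu₀nn
      ((subset_tsupport u₀).trans hu₀supp) hxy ht₀)
  refine (outerRadius_sub_innerRadius_le_of_norm_add_le (by positivity) ⟨0, hθ0⟩ hmono).imp_right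
    fun h => h.trans ?_
  nlinarith [Real.two_le_pi]

/-- For an invading solution with initial datum supported in `B_δ`, for each
`θ ∈ (0,Z)` one has `0 ≤ ℛᵉ_θ(t) − ℛⁱ_θ(t) ≤ δπ` for all large times. -/
theorem outerRadius_sub_innerRadius_le
    {N : ℕ} (hN : 0 < N) (f : ℝ → ℝ → ℝ) (hf : StandingAssumptions f)
    (δ : ℝ) (hδ : 0 < δ)
    (u₀ : EuclideanSpace ℝ (Fin N) → ℝ)
    (hu₀nn : ∀ x, 0 ≤ u₀ x) (hu₀cont : Continuous u₀) (hu₀ne : u₀ ≠ 0)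
    (hu₀supp : tsupport u₀ ⊆ Metric.ball 0 δ)
    (u : ℝ → EuclideanSpace ℝ (Fin N) → ℝ) (hu : IsClassicalSolution f u u₀)
    (Z : ℝ≥0∞) (hZ : 0 < Z) (hinv : Invades u Z)
    (θ : ℝ) (hθ : 0 < θ) (hθZ : ENNReal.ofReal θ < Z) :
    ∃ t₀ > (0:ℝ), ∀ t ≥ t₀,
      0 ≤ outerRadius u θ t - innerRadius u θ t ∧
      outerRadius u θ t - innerRadius u θ t ≤ δ * Real.pi :=
  outerRadius_sub_innerRadius_le_general hN f hf δ hδ u₀ hu₀nn hu₀supp u hu Z hinv θ hθZ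
end

section
/- Let δ̃ > 0 and let φ : ℝ → ℝ be a C¹ function with φ(α) > δ̃ for all α. Define the plane curve γ(α) := φ(α)(cos α, sin α) ∈ ℝ². Assume that for every α the distance from the origin to the line through γ(α) orthogonal to the tangent vector γ'(α) (the normal line to the curve at γ(α)) is at most δ̃. Then for every α one has φ'(α)² ≤ δ̃² φ(α)² / (φ(α)² − δ̃²). -/
/-!
Write `γ = φ · u` with `u(α) = (cos α, sin α)`, so that `γ' = φ' u + φ u⊥` with
`u⊥(α) = u(α + π/2)` and `u, u⊥` orthonormal. Then `⟪γ, γ'⟫ = φ φ'` and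
`‖γ'‖² = φ'² + φ²`. A point `p` of the normal line satisfies `⟪p, γ'⟫ = ⟪γ, γ'⟫`, so
Cauchy–Schwarz and `‖p‖ ≤ δ̃` give `(φ φ')² ≤ δ̃² (φ² + φ'²)`, which rearranges to the
claim since `φ² > δ̃²`.
-/

open Real
open scoped RealInnerProductSpace

noncomputable def polarDir (α : ℝ) : EuclideanSpace ℝ (Fin 2) :=
  EuclideanSpace.single 0 (cos α) + EuclideanSpace.single 1 (sin α)

theorem polarDir_eq_smul (α : ℝ) : polarDir α =
    cos α • EuclideanSpace.single 0 1 + sin α • EuclideanSpace.single 1 1 := by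
  ext i
  fin_cases i <;> simp [polarDir]

theorem hasDerivAt_polarDir (α : ℝ) : HasDerivAt polarDir (polarDir (α + π / 2)) α := by
  rw [funext polarDir_eq_smul]
  simp only [cos_add_pi_div_two, sin_add_pi_div_two]
  exact ((hasDerivAt_cos α).smul_const _).add ((hasDerivAt_sin α).smul_const _)

theorem inner_polarDir (α β : ℝ) : ⟪polarDir α, polarDir β⟫ = cos (α - β) := by
  simp [polarDir, inner_add_left, inner_add_right, EuclideanSpace.inner_single_left, cos_sub]

theorem norm_polarDir (α : ℝ) : ‖polarDir α‖ = 1 := by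
  rw [norm_eq_sqrt_real_inner, inner_polarDir, sub_self, cos_zero, sqrt_one]

theorem inner_polarDir_add_pi_div_two (α : ℝ) : ⟪polarDir α, polarDir (α + π / 2)⟫ = 0 := by
  rw [inner_polarDir, sub_add_cancel_left, cos_neg, cos_pi_div_two]

theorem HasDerivAt.smul_polarDir {φ : ℝ → ℝ} {φ' α : ℝ} (h : HasDerivAt φ φ' α) :
    HasDerivAt (fun t => φ t • polarDir t) (φ α • polarDir (α + π / 2) + φ' • polarDir α) α :=
  h.smul (hasDerivAt_polarDir α)

theorem inner_smul_polarDir_tangent (r a b α : ℝ) :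
    ⟪r • polarDir α, a • polarDir (α + π / 2) + b • polarDir α⟫ = r * b := by
  simp only [inner_add_right, real_inner_smul_left, real_inner_smul_right,
    inner_polarDir_add_pi_div_two, real_inner_self_eq_norm_sq, norm_polarDir]
  ring

theorem norm_sq_polarDir_tangent (a b α : ℝ) :
    ‖a • polarDir (α + π / 2) + b • polarDir α‖ ^ 2 = a ^ 2 + b ^ 2 := by
  rw [norm_add_sq_real, real_inner_smul_left, real_inner_smul_right, real_inner_comm,
    inner_polarDir_add_pi_div_two, norm_smul, norm_smul, norm_polarDir, norm_polarDir]
  simp only [mul_one, mul_zero, Real.norm_eq_abs, sq_abs]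
  ring

theorem sq_inner_le_of_inner_sub_eq_zero {E : Type*} [NormedAddCommGroup E]
    [InnerProductSpace ℝ E] {p x v : E} (h : ⟪p - x, v⟫ = 0) :
    ⟪x, v⟫ ^ 2 ≤ ‖p‖ ^ 2 * ‖v‖ ^ 2 := by
  have hpx : ⟪x, v⟫ = ⟪p, v⟫ := by
    rw [inner_sub_left, sub_eq_zero] at h
    exact h.symm
  rw [hpx, ← mul_pow, ← sq_abs]
  exact pow_le_pow_left₀ (abs_nonneg _) (abs_real_inner_le_norm p v) 2

/-- If the normal lines to the curve `γ(α) = φ(α)(cos α, sin α)` pass at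
distance at most `δ̃` from the origin and `φ > δ̃`, then
`φ'(α)² ≤ δ̃² φ(α)² / (φ(α)² − δ̃²)`.  A point `p` lies on the normal line to `γ` at
`γ(α)` precisely when `p − γ(α)` is orthogonal to the tangent vector `γ'(α)`, so the
distance assumption is expressed by the existence of a point `p` of the normal line with
`‖p‖ ≤ δ̃`. -/
theorem sq_deriv_le_of_normal_lines_close_to_origin
    (δt : ℝ) (hδt : 0 < δt) (φ : ℝ → ℝ) (hφ : ContDiff ℝ 1 φ)
    (hφδ : ∀ α, δt < φ α)
    (γ : ℝ → EuclideanSpace ℝ (Fin 2))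
    (hγ : ∀ α, γ α = φ α • (EuclideanSpace.single (0 : Fin 2) (Real.cos α) +
      EuclideanSpace.single (1 : Fin 2) (Real.sin α)))
    (hnormal : ∀ α, ∃ p : EuclideanSpace ℝ (Fin 2),
      ‖p‖ ≤ δt ∧ (inner ℝ (p - γ α) (deriv γ α) : ℝ) = 0) :
    ∀ α, (deriv φ α) ^ 2 ≤ δt ^ 2 * (φ α) ^ 2 / ((φ α) ^ 2 - δt ^ 2) := by
  intro α
  have hγ_eq : γ = fun t => φ t • polarDir t := funext hγ
  have hderiv : deriv γ α = φ α • polarDir (α + π / 2) + deriv φ α • polarDir α := by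
    rw [hγ_eq]
    exact (hφ.differentiable one_ne_zero α).hasDerivAt.smul_polarDir.deriv
  obtain ⟨p, hp, horth⟩ := hnormal α
  have hkey : (φ α * deriv φ α) ^ 2 ≤ δt ^ 2 * (φ α ^ 2 + deriv φ α ^ 2) := by
    have hCS := sq_inner_le_of_inner_sub_eq_zero horth
    rw [hderiv, hγ_eq, inner_smul_polarDir_tangent, norm_sq_polarDir_tangent] at hCS
    exact hCS.trans (by gcongr)
  have hφ_sq : δt ^ 2 < φ α ^ 2 := pow_lt_pow_left₀ (hφδ α) hδt.le two_ne_zero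
  rw [le_div_iff₀ (sub_pos.2 hφ_sq)]
  linarith
end

section
/- Assume that for every t > 0 the map z ↦ f(t,z)/z is nonincreasing on (0,∞). Let u and v be strictly positive classical solutions of ∂_t u = Δu + f(t,u) on (0,∞)×ℝ^N. Then the function w := u + v is a supersolution: it satisfies ∂_t w ≥ Δw + f(t,w) pointwise on (0,∞)×ℝ^N. -/
lemma ContDiff.differentiable_fderiv_apply {E F : Type*} [NormedAddCommGroup E]
    [NormedSpace ℝ E] [NormedAddCommGroup F] [NormedSpace ℝ F] {φ : E → F} (hφ : ContDiff ℝ 2 φ) (e : E) :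
    Differentiable ℝ (fun y => fderiv ℝ φ y e) :=
  ((hφ.fderiv_right (m := 1) (by norm_num)).clm_apply contDiff_const).differentiable
    one_ne_zero

lemma laplacian_add {N : ℕ} {φ ψ : EuclideanSpace ℝ (Fin N) → ℝ}
    (hφ : ContDiff ℝ 2 φ) (hψ : ContDiff ℝ 2 ψ) (x : EuclideanSpace ℝ (Fin N)) :
    laplacian (fun y => φ y + ψ y) x = laplacian φ x + laplacian ψ x := by
  have hφ1 : Differentiable ℝ φ := hφ.differentiable two_ne_zero
  have hψ1 : Differentiable ℝ ψ := hψ.differentiable two_ne_zero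
  have hfderiv : fderiv ℝ (fun y => φ y + ψ y) = fun y => fderiv ℝ φ y + fderiv ℝ ψ y :=
    funext fun y => fderiv_fun_add (hφ1 y) (hψ1 y)
  simp only [laplacian, hfderiv, add_apply, ← Finset.sum_add_distrib]
  refine Finset.sum_congr rfl fun i _ => ?_
  rw [fderiv_fun_add (hφ.differentiable_fderiv_apply _ x)
    (hψ.differentiable_fderiv_apply _ x)]
  rfl

lemma map_add_le_add_of_antitoneOn_div {g : ℝ → ℝ}
    (hg : AntitoneOn (fun z => g z / z) (Set.Ioi 0)) {a b : ℝ} (ha : 0 < a) (hb : 0 < b) :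
    g (a + b) ≤ g a + g b := by
  have hab : 0 < a + b := add_pos ha hb
  have hga : g (a + b) / (a + b) ≤ g a / a := hg ha hab (by linarith)
  have hgb : g (a + b) / (a + b) ≤ g b / b := hg hb hab (by linarith)
  calc g (a + b) = a * (g (a + b) / (a + b)) + b * (g (a + b) / (a + b)) := by
        field_simp
    _ ≤ a * (g a / a) + b * (g b / b) := by gcongr
    _ = g a + g b := by field_simp

theorem sum_of_solutions_is_supersolution_general
    {N : ℕ} (f : ℝ → ℝ → ℝ)
    (hconc : ∀ t > (0:ℝ), AntitoneOn (fun z => f t z / z) (Set.Ioi (0:ℝ)))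
    (u v : ℝ → EuclideanSpace ℝ (Fin N) → ℝ)
    (hut : ∀ x, ∀ t > (0:ℝ), DifferentiableAt ℝ (fun s => u s x) t)
    (hux : ∀ t > (0:ℝ), ContDiff ℝ 2 (u t))
    (hueq : ∀ t > (0:ℝ), ∀ x, deriv (fun s => u s x) t = laplacian (u t) x + f t (u t x))
    (hupos : ∀ t > (0:ℝ), ∀ x, 0 < u t x)
    (hvt : ∀ x, ∀ t > (0:ℝ), DifferentiableAt ℝ (fun s => v s x) t)
    (hvx : ∀ t > (0:ℝ), ContDiff ℝ 2 (v t))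
    (hveq : ∀ t > (0:ℝ), ∀ x, deriv (fun s => v s x) t = laplacian (v t) x + f t (v t x))
    (hvpos : ∀ t > (0:ℝ), ∀ x, 0 < v t x) :
    ∀ t > (0:ℝ), ∀ x,
      laplacian (fun y => u t y + v t y) x + f t (u t x + v t x)
        ≤ deriv (fun s => u s x + v s x) t := by
  intro t ht x
  have hf : f t (u t x + v t x) ≤ f t (u t x) + f t (v t x) :=
    map_add_le_add_of_antitoneOn_div (hconc t ht) (hupos t ht x) (hvpos t ht x)
  rw [laplacian_add (hux t ht) (hvx t ht), deriv_fun_add (hut x t ht) (hvt x t ht),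
    hueq t ht x, hveq t ht x]
  linarith

/-- If `z ↦ f(t,z)/z` is nonincreasing on `(0,∞)` for every `t > 0`, then
the sum `w = u + v` of two strictly positive classical solutions of `∂ₜu = Δu + f(t,u)`
is a supersolution: `∂ₜw ≥ Δw + f(t,w)` pointwise on `(0,∞) × ℝᴺ`. -/
theorem sum_of_solutions_is_supersolution
    {N : ℕ} (hN : 0 < N) (f : ℝ → ℝ → ℝ)
    (hconc : ∀ t > (0:ℝ), AntitoneOn (fun z => f t z / z) (Set.Ioi (0:ℝ)))
    (u v : ℝ → EuclideanSpace ℝ (Fin N) → ℝ)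
    (hut : ∀ x, ∀ t > (0:ℝ), DifferentiableAt ℝ (fun s => u s x) t)
    (hux : ∀ t > (0:ℝ), ContDiff ℝ 2 (u t))
    (hueq : ∀ t > (0:ℝ), ∀ x, deriv (fun s => u s x) t = laplacian (u t) x + f t (u t x))
    (hupos : ∀ t > (0:ℝ), ∀ x, 0 < u t x)
    (hvt : ∀ x, ∀ t > (0:ℝ), DifferentiableAt ℝ (fun s => v s x) t)
    (hvx : ∀ t > (0:ℝ), ContDiff ℝ 2 (v t))
    (hveq : ∀ t > (0:ℝ), ∀ x, deriv (fun s => v s x) t = laplacian (v t) x + f t (v t x))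
    (hvpos : ∀ t > (0:ℝ), ∀ x, 0 < v t x) :
    ∀ t > (0:ℝ), ∀ x,
      laplacian (fun y => u t y + v t y) x + f t (u t x + v t x)
        ≤ deriv (fun s => u s x + v s x) t :=
  sum_of_solutions_is_supersolution_general f hconc u v hut hux hueq hupos hvt hvx hveq hvpos
end

section
/- Let u : [0,∞)×ℝ^N → ℝ be continuous and satisfy: (a) the invasion property with level Z ∈ (0,+∞]; (b) for every t, u(t,x) → 0 as |x| → ∞; (c) there exist functions φ : [0,∞)² → ℝ, continuous in the second variable, and Γ : [0,∞) → ℝ^N such that sup_{x∈ℝ^N} |u(t,x) − φ(t,|x−Γ(t)|)| → 0 as t → ∞; and (d) for every level σ ∈ (0,Z) the upper level set U_σ(t) is star-shaped with respect to the origin for all sufficiently large t. Then for all θ', θ with 0 < θ' < θ < Z, one has ℛ^i_{θ'}(t) ≥ ℛ^e_θ(t) for all sufficiently large t. -/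
open Filter Metric Set
open scoped ENNReal NNReal

theorem exists_smul_norm_eq {n : ℕ} (y c₀ : EuclideanSpace ℝ (Fin n)) (hy : y ≠ 0) (ρ : ℝ) (hlt : ‖y - c₀‖ < ρ) :
    ∃ c ≥ (1:ℝ), ‖c • y - c₀‖ = ρ := by
  have hρ : 0 ≤ ρ := le_of_lt (lt_of_le_of_lt (norm_nonneg _) hlt)
  set g : ℝ → ℝ := fun c => ‖c • y - c₀‖ with hg
  have hgc : Continuous g := ((continuous_id.smul continuous_const).sub continuous_const).norm
  have hy0 : 0 < ‖y‖ := norm_pos_iff.mpr hy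
  obtain ⟨C, hCdef⟩ : ∃ C : ℝ, C = (ρ + ‖c₀‖ + 1) / ‖y‖ + 1 := ⟨_, rfl⟩
  have h1 : 0 ≤ (ρ + ‖c₀‖ + 1) / ‖y‖ := by positivity
  have hC1 : (1:ℝ) ≤ C := by rw [hCdef]; linarith
  have hCy : C * ‖y‖ = ρ + ‖c₀‖ + 1 + ‖y‖ := by rw [hCdef]; field_simp
  have hgC : ρ ≤ g C := by
    have h2 : C * ‖y‖ - ‖c₀‖ ≤ ‖C • y - c₀‖ := by
      calc C * ‖y‖ - ‖c₀‖ ≤ ‖C • y‖ - ‖c₀‖ := by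
            rw [norm_smul, Real.norm_eq_abs, abs_of_pos (by linarith : (0:ℝ) < C)]
        _ ≤ ‖C • y - c₀‖ := norm_sub_norm_le _ _
    have : g C = ‖C • y - c₀‖ := rfl
    linarith
  obtain ⟨c, hc, hgc'⟩ := intermediate_value_Icc hC1 hgc.continuousOn
    (⟨by simpa [g] using hlt.le, hgC⟩ : ρ ∈ Icc (g 1) (g C))
  exact ⟨c, hc.1, hgc'⟩

theorem decaybd {E : Type*} [NormedAddCommGroup E] (u : E → ℝ) (θ' : ℝ) (h1 : 0 < θ')
    (h : Tendsto u (cocompact E) (nhds 0)) : ∃ M ≥ (0:ℝ), ∀ x, θ' ≤ u x → ‖x‖ ≤ M := by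
  have := h (Metric.ball_mem_nhds 0 h1)
  rw [Filter.mem_map, Filter.mem_cocompact] at this
  obtain ⟨K, hK, hKs⟩ := this
  obtain ⟨M, hM⟩ := hK.isBounded.subset_closedBall 0
  refine ⟨max M 0, le_max_right _ _, fun x hx => ?_⟩
  by_contra hc
  push_neg at hc
  have hxK : x ∉ K := fun hxK => by
    have := hM hxK; simp [mem_closedBall, dist_eq_norm] at this
    exact absurd (this.trans (le_max_left M 0)) (not_le.mpr hc)
  have := hKs hxK
  simp [Metric.mem_ball, Real.dist_eq] at this
  exact absurd hx (not_le.mpr (lt_of_abs_lt this))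


/-- If a continuous invading function `u` decays in space, converges
uniformly to a radial profile `φ(t, |x − Γ(t)|)` (with `φ` continuous in its second
variable), and has eventually star-shaped upper level sets, then for any levels
`0 < θ' < θ < Z` one has `ℛⁱ_{θ'}(t) ≥ ℛᵉ_θ(t)` for all large `t`. -/
theorem innerRadius_ge_outerRadius_of_radial_profile
    {N : ℕ} (hN : 0 < N) (u : ℝ → EuclideanSpace ℝ (Fin N) → ℝ)
    (hcont : ContinuousOn (Function.uncurry u)
      (Set.Ici (0:ℝ) ×ˢ (Set.univ : Set (EuclideanSpace ℝ (Fin N)))))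
    (Z : ℝ≥0∞) (hZ : 0 < Z) (hinv : Invades u Z)
    (hdecay : ∀ t ≥ (0:ℝ), Tendsto (u t) (cocompact (EuclideanSpace ℝ (Fin N))) (nhds 0))
    (φ : ℝ → ℝ → ℝ) (hφcont : ∀ t, Continuous (φ t))
    (Γ : ℝ → EuclideanSpace ℝ (Fin N))
    (hconv : ∀ ε > (0:ℝ), ∃ t₀ : ℝ, ∀ t ≥ t₀, ∀ x, |u t x - φ t ‖x - Γ t‖| ≤ ε)
    (hstar : ∀ σ : ℝ, 0 < σ → ENNReal.ofReal σ < Z →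
      ∃ t₀ : ℝ, ∀ t ≥ t₀, StarConvex ℝ (0 : EuclideanSpace ℝ (Fin N)) (upperLevelSet u σ t))
    (θ' θ : ℝ) (h1 : 0 < θ') (h2 : θ' < θ) (h3 : ENNReal.ofReal θ < Z) :
    ∃ t₀ : ℝ, ∀ t ≥ t₀, outerRadius u θ t ≤ innerRadius u θ' t := by
  obtain ⟨ε, hεdef⟩ : ∃ ε : ℝ, ε = (θ - θ') / 4 := ⟨_, rfl⟩
  have hεpos : 0 < ε := by rw [hεdef]; linarith
  obtain ⟨σ, hσdef⟩ : ∃ σ : ℝ, σ = θ' + ε := ⟨_, rfl⟩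
  have hσpos : 0 < σ := by rw [hσdef]; linarith
  have hσθ' : θ' < σ := by rw [hσdef]; linarith
  have hσθ : σ < θ := by rw [hσdef, hεdef]; linarith
  have hσ2ε : σ < θ - 2 * ε := by rw [hσdef, hεdef]; linarith
  obtain ⟨z₀, hz₀θ, hz₀Z⟩ : ∃ z₀ : ℝ, θ < z₀ ∧ ENNReal.ofReal z₀ < Z := by
    rcases eq_or_ne Z ⊤ with hT | hT
    · exact ⟨θ + 1, by linarith, by rw [hT]; exact ENNReal.ofReal_lt_top⟩
    · have hθZ : θ < Z.toReal :=
        (ENNReal.ofReal_lt_iff_lt_toReal (by linarith) hT).mp h3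
      refine ⟨(θ + Z.toReal) / 2, by linarith, ?_⟩
      rw [ENNReal.ofReal_lt_iff_lt_toReal (by linarith) hT]
      linarith
  have hσZ : ENNReal.ofReal σ < Z :=
    lt_of_le_of_lt (ENNReal.ofReal_le_ofReal hσθ.le) h3
  obtain ⟨t₁, ht₁⟩ := hconv ε hεpos
  obtain ⟨t₂, ht₂⟩ := hstar σ hσpos hσZ
  obtain ⟨t₃, ht₃⟩ := hinv z₀ hz₀Z {0} isCompact_singleton
  refine ⟨max (max t₁ t₂) (max t₃ 0), fun t ht => ?_⟩
  have ht1 : t ≥ t₁ := le_trans (le_max_of_le_left (le_max_left _ _)) ht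
  have ht2 : t ≥ t₂ := le_trans (le_max_of_le_left (le_max_right _ _)) ht
  have ht3 : t ≥ t₃ := le_trans (le_max_of_le_right (le_max_left _ _)) ht
  have htnn : (0:ℝ) ≤ t := le_trans (le_max_of_le_right (le_max_right _ _)) ht
  have hu0 : z₀ ≤ u t 0 := ht₃ t ht3 0 rfl
  obtain ⟨M, hM0, hMbd⟩ := decaybd (u t) θ' h1 (hdecay t htnn)
  -- the set of distances to Γ t of points in the θ-upper level set
  set D : Set ℝ := (fun x => ‖x - Γ t‖) '' {x | θ < u t x} with hD
  have hA0 : (0 : EuclideanSpace ℝ (Fin N)) ∈ {x | θ < u t x} := by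
    simp only [mem_setOf_eq]; linarith
  have hDne : D.Nonempty := ⟨‖(0 : EuclideanSpace ℝ (Fin N)) - Γ t‖, 0, hA0, rfl⟩
  have hDbd : BddAbove D := by
    refine ⟨M + ‖Γ t‖, fun d hd => ?_⟩
    obtain ⟨x, hx, rfl⟩ := hd
    have hxM : ‖x‖ ≤ M := hMbd x (by simp only [mem_setOf_eq] at hx; linarith)
    calc ‖x - Γ t‖ ≤ ‖x‖ + ‖Γ t‖ := norm_sub_le _ _
      _ ≤ M + ‖Γ t‖ := by linarith
  obtain ⟨ρs, hρsdef⟩ : ∃ ρs : ℝ, ρs = sSup D := ⟨_, rfl⟩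
  have hρs0 : 0 ≤ ρs := by
    rw [hρsdef]
    exact le_trans (norm_nonneg _) (le_csSup hDbd ⟨0, hA0, rfl⟩)
  -- inner radius set is bounded above
  have hSinBdd : BddAbove {r : ℝ | ∃ x₀, ∀ x ∈ Metric.ball x₀ r, θ' < u t x} := by
    refine ⟨4 * M + 1, fun r hr => ?_⟩
    obtain ⟨x₀, hx₀⟩ := hr
    rcases le_or_gt r 0 with hr0 | hr0
    · linarith
    · have hx₀M : ‖x₀‖ ≤ M :=
        hMbd x₀ (le_of_lt (hx₀ x₀ (mem_ball_self hr0)))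
      set e : EuclideanSpace ℝ (Fin N) := EuclideanSpace.single ⟨0, hN⟩ (1:ℝ) with he
      have hene : ‖e‖ = 1 := by simp [he]
      have hx₁ : x₀ + (r/2) • e ∈ Metric.ball x₀ r := by
        rw [mem_ball, dist_eq_norm]
        simp only [add_sub_cancel_left]
        rw [norm_smul, Real.norm_eq_abs, abs_of_pos (by linarith), hene]
        linarith
      have hx₁M : ‖x₀ + (r/2) • e‖ ≤ M := hMbd _ (le_of_lt (hx₀ _ hx₁))
      have : r / 2 = ‖(x₀ + (r/2) • e) - x₀‖ := by
        simp only [add_sub_cancel_left]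
        rw [norm_smul, Real.norm_eq_abs, abs_of_pos (by linarith), hene, mul_one]
      have : r / 2 ≤ 2 * M := by
        rw [this]
        calc ‖(x₀ + (r/2) • e) - x₀‖ ≤ ‖x₀ + (r/2) • e‖ + ‖x₀‖ := norm_sub_le _ _
          _ ≤ 2 * M := by linarith
      linarith
  -- final estimate via le_of_forall_pos_le_add
  refine le_of_forall_pos_le_add (fun δ hδ => ?_)
  -- pick a near-maximal point
  obtain ⟨d, hdD, hdlt⟩ := exists_lt_of_lt_csSup hDne
    (show ρs - δ/2 < sSup D by rw [← hρsdef]; linarith)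
  obtain ⟨xs, hxs, hxsd⟩ := hdD
  simp only [mem_setOf_eq] at hxs
  obtain ⟨ρ', hρ'def⟩ : ∃ ρ' : ℝ, ρ' = ‖xs - Γ t‖ := ⟨_, rfl⟩
  have hρ'le : ρ' ≤ ρs := by
    rw [hρ'def, hρsdef]; exact le_csSup hDbd ⟨xs, hxs, rfl⟩
  have hxsd' : ‖xs - Γ t‖ = d := hxsd
  have hρ'gt : ρs - δ/2 < ρ' := by rw [hρ'def, hxsd']; exact hdlt
  -- φ t ρ' > θ - ε
  have hφρ' : θ - ε < φ t ρ' := by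
    have := ht₁ t ht1 xs
    rw [← hρ'def] at this
    have := abs_le.mp this
    linarith [this.1, this.2]
  -- claim: ball (Γ t) ρ' ⊆ upperLevelSet u θ'
  have hball : ∀ y ∈ Metric.ball (Γ t) ρ', θ' < u t y := by
    intro y hy
    rw [mem_ball, dist_eq_norm] at hy
    rcases eq_or_ne y 0 with rfl | hy0
    · linarith
    · obtain ⟨c, hc1, hcρ⟩ := exists_smul_norm_eq y (Γ t) hy0 ρ' hy
      have hcpos : 0 < c := lt_of_lt_of_le one_pos hc1
      have hp : σ < u t (c • y) := by
        have := abs_le.mp (ht₁ t ht1 (c • y))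
        rw [hcρ] at this
        linarith [this.1, this.2]
      have hstar' := ht₂ t ht2
      have hmem : c • y ∈ upperLevelSet u σ t := hp
      have := hstar'.smul_mem hmem (by positivity : (0:ℝ) ≤ c⁻¹)
        (inv_le_one_of_one_le₀ hc1)
      rw [smul_smul, inv_mul_cancel₀ (ne_of_gt hcpos), one_smul] at this
      have : σ < u t y := this
      linarith
  -- inner radius ≥ ρ'
  have hinner : ρ' ≤ innerRadius u θ' t := by
    rw [innerRadius]
    exact le_csSup hSinBdd ⟨Γ t, hball⟩
  -- outer radius ≤ ρs + δ/2
  have houter : outerRadius u θ t ≤ ρs + δ/2 := by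
    rw [outerRadius]
    refine csInf_le ⟨0, fun r hr => le_of_lt hr.1⟩ ?_
    refine ⟨by linarith, Γ t, fun x hx => ?_⟩
    rw [mem_ball, dist_eq_norm, not_lt] at hx
    by_contra hc
    push_neg at hc
    have : ‖x - Γ t‖ ≤ ρs := by
      rw [hρsdef]; exact le_csSup hDbd ⟨x, hc, rfl⟩
    linarith
  linarith
end

section
/- Let w : ℝ^N → ℝ be continuous, nonnegative, and not identically zero, and let v : ℝ^N → ℝ be continuous, nonnegative, and compactly supported. Then there exist finitely many points x₁, …, x_n ∈ ℝ^N (not necessarily distinct) such that v(x) ≤ Σ_{j=1}^n w(x − x_j) for all x ∈ ℝ^N. -/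
/-- A continuous nonnegative compactly supported function `v` is dominated
by a finite sum of translates of any continuous nonnegative function `w ≢ 0`. -/
theorem dominated_by_finite_sum_of_translates
    {N : ℕ} (hN : 0 < N) (w v : EuclideanSpace ℝ (Fin N) → ℝ)
    (hwcont : Continuous w) (hwnn : ∀ x, 0 ≤ w x) (hwne : w ≠ 0)
    (hvcont : Continuous v) (hvnn : ∀ x, 0 ≤ v x) (hvsupp : HasCompactSupport v) :
    ∃ (n : ℕ) (p : Fin n → EuclideanSpace ℝ (Fin N)),
      ∀ y, v y ≤ ∑ j : Fin n, w (y - p j) := by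
  classical
  -- point where w is positive
  obtain ⟨x₀, hx₀⟩ : ∃ x₀, w x₀ ≠ 0 := Function.ne_iff.mp hwne
  have hc : 0 < w x₀ := lt_of_le_of_ne (hwnn x₀) (Ne.symm hx₀)
  set c := w x₀ with hcdef
  -- ball where w > c/2
  have hU : IsOpen (w ⁻¹' Set.Ioi (c/2)) := (isOpen_Ioi).preimage hwcont
  have hx₀U : x₀ ∈ w ⁻¹' Set.Ioi (c/2) := by
    simp only [Set.mem_preimage, Set.mem_Ioi]; linarith
  obtain ⟨δ, hδ, hball⟩ := Metric.isOpen_iff.mp hU x₀ hx₀U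
  -- bound on v
  set K := tsupport v with hKdef
  have hK : IsCompact K := hvsupp
  obtain ⟨M', hM'⟩ : BddAbove (v '' K) := (hK.image hvcont).bddAbove
  set M : ℝ := max M' 0 with hMdef
  have hMnn : 0 ≤ M := le_max_right _ _
  have hvM : ∀ x, v x ≤ M := by
    intro x
    by_cases hx : x ∈ K
    · exact le_trans (hM' ⟨x, hx, rfl⟩) (le_max_left _ _)
    · rw [image_eq_zero_of_notMem_tsupport hx]; exact hMnn
  -- multiplicity
  obtain ⟨m, hm⟩ := exists_nat_ge (M / (c/2))
  have hmM : M ≤ m * (c/2) := by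
    rw [div_le_iff₀ (by positivity)] at hm; linarith
  -- finite subcover of K by δ-balls
  obtain ⟨t, ht⟩ := hK.elim_finite_subcover (fun y : K => Metric.ball (y : EuclideanSpace ℝ (Fin N)) δ)
    (fun y => Metric.isOpen_ball) (fun x hx => Set.mem_iUnion.mpr ⟨⟨x, hx⟩, Metric.mem_ball_self hδ⟩)
  set k := t.card with hkdef
  set e : Fin k ≃ {x // x ∈ t} := t.equivFin.symm with hedef
  refine ⟨m * k, fun i => (((e (finProdFinEquiv.symm i).2 : {x // x ∈ t}) : K) : EuclideanSpace ℝ (Fin N)) - x₀, ?_⟩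
  intro y
  have hsum : ∑ j : Fin (m * k), w (y - ((((e (finProdFinEquiv.symm j).2 : {x // x ∈ t}) : K) : EuclideanSpace ℝ (Fin N)) - x₀))
      = ∑ q : Fin m × Fin k, w (y - ((((e q.2 : {x // x ∈ t}) : K) : EuclideanSpace ℝ (Fin N)) - x₀)) := by
    rw [← Equiv.sum_comp finProdFinEquiv
      (fun j : Fin (m*k) => w (y - ((((e (finProdFinEquiv.symm j).2 : {x // x ∈ t}) : K) : EuclideanSpace ℝ (Fin N)) - x₀)))]
    simp
  rw [hsum, Fintype.sum_prod_type_right]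
  -- now sum over j : Fin k of (∑ i : Fin m, term j) = ∑ j, m * term j
  by_cases hy : y ∈ K
  · obtain ⟨z, hzt, hyz⟩ : ∃ z ∈ t, y ∈ Metric.ball ((z : K) : EuclideanSpace ℝ (Fin N)) δ := by
      have := ht hy
      simpa using this
    set j₀ : Fin k := e.symm ⟨z, hzt⟩ with hj₀
    have hterm : c/2 < w (y - ((((e j₀ : {x // x ∈ t}) : K) : EuclideanSpace ℝ (Fin N)) - x₀)) := by
      have : (e j₀ : {x // x ∈ t}) = ⟨z, hzt⟩ := by simp [hj₀]
      rw [this]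
      have hmem : y - (((z : K) : EuclideanSpace ℝ (Fin N)) - x₀) ∈ Metric.ball x₀ δ := by
        rw [Metric.mem_ball, dist_eq_norm]
        have : y - (((z : K) : EuclideanSpace ℝ (Fin N)) - x₀) - x₀ = y - ((z : K) : EuclideanSpace ℝ (Fin N)) := by abel
        rw [this, ← dist_eq_norm]
        exact hyz
      exact hball hmem
    calc v y ≤ M := hvM y
      _ ≤ m * (c/2) := hmM
      _ ≤ ∑ i : Fin m, w (y - ((((e j₀ : {x // x ∈ t}) : K) : EuclideanSpace ℝ (Fin N)) - x₀)) := by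
          rw [Finset.sum_const, Finset.card_univ, Fintype.card_fin, nsmul_eq_mul]
          gcongr
      _ ≤ ∑ j : Fin k, ∑ i : Fin m, w (y - ((((e j : {x // x ∈ t}) : K) : EuclideanSpace ℝ (Fin N)) - x₀)) := by
          apply Finset.single_le_sum (f := fun j : Fin k => ∑ i : Fin m, w (y - ((((e j : {x // x ∈ t}) : K) : EuclideanSpace ℝ (Fin N)) - x₀)))
          · intro j _
            exact Finset.sum_nonneg fun i _ => hwnn _
          · exact Finset.mem_univ j₀
  · rw [image_eq_zero_of_notMem_tsupport hy]
    exact Finset.sum_nonneg fun j _ => Finset.sum_nonneg fun i _ => hwnn _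
end
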